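/- arXiv:1805.09571 — 4 statements merged into one kernel-verified Lean document; each statement's English description precedes it below -/
import Mathlib

section
/- Let P be a probability measure on ℝ² that is absolutely continuous with respect to the Lebesgue measure λ, with density (noise function) f = dP/dλ. Let X ⊆ ℝ², V_X = {j − i : i, j ∈ X}, and let ℓ : [0,∞) → [0,∞). If P satisfies ℓ-privacy on X, i.e., P(V) ≤ e^{ℓ(‖u‖)} · P(τ_u(V)) for every measurable V ⊆ ℝ² and every u ∈ V_X, then there exists a Lebesgue-null set N ⊂ ℝ² such that for all v, v′ ∈ ℝ² \ N with v − v′ ∈ V_X, f(v) ≤ e^{ℓ(‖v − v′‖)} · f(v′). -/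
/-!
At a Lebesgue point `v` of the density `f`, the value `f v` is the limit of the averages of `f`
over the balls `closedBall v r`, and the mass `P (closedBall v r)` is the integral of `f` over
that ball. Privacy applied to `V = closedBall v r` and the shift `u = v' - v`, which maps it onto
`closedBall v' r`, compares these masses; since Lebesgue measure gives both balls the same volume,
the comparison passes to the averages and, letting `r → 0`, to the values at any two Lebesgue
points. By the Lebesgue differentiation theorem almost every point is a Lebesgue point.
-/

open MeasureTheory Real Metric Filter Topology

section WithDensity

variable {α : Type*} [MeasurableSpace α] {μ : Measure α} {f : α → ℝ}

lemma integrable_of_isFiniteMeasure_withDensity_ofReal (hf : AEStronglyMeasurable f μ)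
    (hf_nonneg : 0 ≤ᵐ[μ] f) [IsFiniteMeasure (μ.withDensity fun x => ENNReal.ofReal (f x))] :
    Integrable f μ := by
  refine ⟨hf, (hasFiniteIntegral_iff_ofReal hf_nonneg).mpr ?_⟩
  simpa [withDensity_apply] using
    measure_lt_top (μ.withDensity fun x => ENNReal.ofReal (f x)) Set.univ

lemma withDensity_ofReal_apply_eq_ofReal_setIntegral (hfi : Integrable f μ)
    (hf_nonneg : 0 ≤ᵐ[μ] f) {s : Set α} (hs : MeasurableSet s) :
    μ.withDensity (fun x => ENNReal.ofReal (f x)) s = ENNReal.ofReal (∫ x in s, f x ∂μ) := by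
  rw [withDensity_apply _ hs,
    ofReal_integral_eq_lintegral_ofReal hfi.integrableOn (ae_restrict_of_ae hf_nonneg)]

lemma setIntegral_le_mul_setIntegral_of_withDensity_ofReal_le (hfi : Integrable f μ)
    (hf_nonneg : 0 ≤ᵐ[μ] f) {s t : Set α} (hs : MeasurableSet s) (ht : MeasurableSet t) {c : ℝ}
    (hc : 0 ≤ c)
    (h : μ.withDensity (fun x => ENNReal.ofReal (f x)) s ≤
      ENNReal.ofReal c * μ.withDensity (fun x => ENNReal.ofReal (f x)) t) :
    ∫ x in s, f x ∂μ ≤ c * ∫ x in t, f x ∂μ := by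
  rw [withDensity_ofReal_apply_eq_ofReal_setIntegral hfi hf_nonneg hs,
    withDensity_ofReal_apply_eq_ofReal_setIntegral hfi hf_nonneg ht,
    ← ENNReal.ofReal_mul hc] at h
  exact (ENNReal.ofReal_le_ofReal_iff
    (mul_nonneg hc (setIntegral_nonneg_of_ae_restrict (ae_restrict_of_ae hf_nonneg)))).mp h

end WithDensity

lemma setAverage_le_mul_setAverage_of_measure_eq {α : Type*} [MeasurableSpace α] {μ : Measure α}
    {f : α → ℝ} {s t : Set α} {c : ℝ} (hst : μ s = μ t)
    (h : ∫ x in s, f x ∂μ ≤ c * ∫ x in t, f x ∂μ) :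
    ⨍ x in s, f x ∂μ ≤ c * ⨍ x in t, f x ∂μ := by
  rw [setAverage_eq, setAverage_eq, measureReal_def, measureReal_def, hst, smul_eq_mul,
    smul_eq_mul, mul_left_comm]
  exact mul_le_mul_of_nonneg_left h (by positivity)

lemma ae_tendsto_setAverage_closedBall {α F : Type*} [PseudoMetricSpace α] [MeasurableSpace α]
    [BorelSpace α] [SecondCountableTopology α] {μ : Measure α} [IsLocallyFiniteMeasure μ]
    [IsUnifLocDoublingMeasure μ] [NormedAddCommGroup F] [NormedSpace ℝ F] [CompleteSpace F]
    {f : α → F} (hf : LocallyIntegrable f μ) :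
    ∀ᵐ x ∂μ, Tendsto (fun r => ⨍ y in closedBall x r, f y ∂μ) (𝓝[>] 0) (𝓝 (f x)) := by
  filter_upwards [IsUnifLocDoublingMeasure.ae_tendsto_average μ hf 1] with x hx
  refine hx (fun _ => x) id tendsto_id ?_
  filter_upwards [self_mem_nhdsWithin] with r (hr : 0 < r)
  exact mem_closedBall_self (by simpa using hr.le)

lemma le_mul_of_setIntegral_closedBall_le {E : Type*} [NormedAddCommGroup E] [NormedSpace ℝ E]
    [MeasurableSpace E] [BorelSpace E] [FiniteDimensional ℝ E] {μ : Measure E}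
    [μ.IsAddHaarMeasure] {f : E → ℝ} {c : ℝ} {v w : E}
    (hv : Tendsto (fun r => ⨍ y in closedBall v r, f y ∂μ) (𝓝[>] 0) (𝓝 (f v)))
    (hw : Tendsto (fun r => ⨍ y in closedBall w r, f y ∂μ) (𝓝[>] 0) (𝓝 (f w)))
    (h : ∀ r > 0, ∫ y in closedBall v r, f y ∂μ ≤ c * ∫ y in closedBall w r, f y ∂μ) :
    f v ≤ c * f w := by
  refine le_of_tendsto_of_tendsto hv (hw.const_mul c) ?_
  filter_upwards [self_mem_nhdsWithin] with r hr
  refine setAverage_le_mul_setAverage_of_measure_eq ?_ (h r hr)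
  rw [Measure.addHaar_closedBall_center μ v, Measure.addHaar_closedBall_center μ w]

lemma image_add_right_closedBall {E : Type*} [SeminormedAddCommGroup E] (x u : E) (r : ℝ) :
    (fun v => v + u) '' closedBall x r = closedBall (x + u) r :=
  (IsometryEquiv.addRight u).image_closedBall x r

theorem l_private_distribution_implies_noise_function_condition_general
    (f : EuclideanSpace ℝ (Fin 2) → ℝ) (hf_meas : Measurable f)
    (hf_nonneg : ∀ v, 0 ≤ f v)
    (P : Measure (EuclideanSpace ℝ (Fin 2)))
    (hP : P = volume.withDensity (fun v => ENNReal.ofReal (f v)))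
    [IsProbabilityMeasure P]
    (X : Set (EuclideanSpace ℝ (Fin 2)))
    (ℓ : ℝ → ℝ)
    (hpriv : ∀ V : Set (EuclideanSpace ℝ (Fin 2)), MeasurableSet V →
      ∀ u ∈ {u : EuclideanSpace ℝ (Fin 2) | ∃ i ∈ X, ∃ j ∈ X, u = j - i},
        P V ≤ ENNReal.ofReal (Real.exp (ℓ ‖u‖)) * P ((fun v => v + u) '' V)) :
    ∃ N : Set (EuclideanSpace ℝ (Fin 2)), volume N = 0 ∧
      ∀ v ∉ N, ∀ v' ∉ N,
        v - v' ∈ {u : EuclideanSpace ℝ (Fin 2) | ∃ i ∈ X, ∃ j ∈ X, u = j - i} →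
          f v ≤ Real.exp (ℓ ‖v - v'‖) * f v' := by
  subst hP
  have hf_ae_nonneg : 0 ≤ᵐ[volume] f := .of_forall hf_nonneg
  have hf_int : Integrable f :=
    integrable_of_isFiniteMeasure_withDensity_ofReal hf_meas.aestronglyMeasurable hf_ae_nonneg
  refine ⟨_, ae_iff.mp (ae_tendsto_setAverage_closedBall hf_int.locallyIntegrable), ?_⟩
  rintro v hv v' hv' ⟨i, hi, j, hj, hij⟩
  have hu : v' - v ∈ {u | ∃ i ∈ X, ∃ j ∈ X, u = j - i} :=
    ⟨j, hj, i, hi, by rw [← neg_sub, hij, neg_sub]⟩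
  rw [← norm_sub_rev]
  refine le_mul_of_setIntegral_closedBall_le (not_not.mp hv) (not_not.mp hv') fun r _ => ?_
  have hball := hpriv (closedBall v r) measurableSet_closedBall _ hu
  rw [image_add_right_closedBall, add_sub_cancel] at hball
  exact setIntegral_le_mul_setIntegral_of_withDensity_ofReal_le hf_int hf_ae_nonneg
    measurableSet_closedBall measurableSet_closedBall (exp_pos _).le hball

/-- If a noise distribution `P` on ℝ², absolutely continuous w.r.t. Lebesgue
measure with density (noise function) `f`, satisfies `ℓ`-privacy on `X`, then there is a
Lebesgue-null set `N` such that `f v ≤ exp (ℓ ‖v - v'‖) * f v'` for all `v, v' ∉ N`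
with `v - v' ∈ V_X`. -/
theorem l_private_distribution_implies_noise_function_condition
    (f : EuclideanSpace ℝ (Fin 2) → ℝ) (hf_meas : Measurable f)
    (hf_nonneg : ∀ v, 0 ≤ f v)
    (P : Measure (EuclideanSpace ℝ (Fin 2)))
    (hP : P = volume.withDensity (fun v => ENNReal.ofReal (f v)))
    [IsProbabilityMeasure P]
    (X : Set (EuclideanSpace ℝ (Fin 2)))
    (ℓ : ℝ → ℝ) (hℓ : ∀ d : ℝ, 0 ≤ d → 0 ≤ ℓ d)
    (hpriv : ∀ V : Set (EuclideanSpace ℝ (Fin 2)), MeasurableSet V →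
      ∀ u ∈ {u : EuclideanSpace ℝ (Fin 2) | ∃ i ∈ X, ∃ j ∈ X, u = j - i},
        P V ≤ ENNReal.ofReal (Real.exp (ℓ ‖u‖)) * P ((fun v => v + u) '' V)) :
    ∃ N : Set (EuclideanSpace ℝ (Fin 2)), volume N = 0 ∧
      ∀ v ∉ N, ∀ v' ∉ N,
        v - v' ∈ {u : EuclideanSpace ℝ (Fin 2) | ∃ i ∈ X, ∃ j ∈ X, u = j - i} →
          f v ≤ Real.exp (ℓ ‖v - v'‖) * f v' :=
  l_private_distribution_implies_noise_function_condition_general f hf_meas hf_nonneg P hP X ℓ hpriv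
end

section
/- Let f : ℝ² → [0,∞) be a measurable density and let P be the measure on ℝ² with density f with respect to the Lebesgue measure λ. Let X ⊆ ℝ², V_X = {j − i : i, j ∈ X}, and let ℓ : [0,∞) → [0,∞). Suppose there is a Lebesgue-null set N ⊂ ℝ² such that for all v, v′ ∈ ℝ² \ N with v − v′ ∈ V_X, f(v) ≤ e^{ℓ(‖v − v′‖)} · f(v′). Then P satisfies ℓ-privacy on X: for every measurable set V ⊆ ℝ² and every u ∈ V_X, P(V) ≤ e^{ℓ(‖u‖)} · P(τ_u(V)). -/
open MeasureTheory Real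

/-- If a measurable density `f` on ℝ² satisfies
`f v ≤ exp (ℓ ‖v - v'‖) * f v'` for all `v, v'` outside some Lebesgue-null set `N`
with `v - v' ∈ V_X`, then the measure `P` with density `f` satisfies `ℓ`-privacy
on `X`: `P V ≤ exp (ℓ ‖u‖) * P (τ_u V)` for every measurable `V` and `u ∈ V_X`. -/
theorem noise_function_condition_implies_l_private_distribution
    (f : EuclideanSpace ℝ (Fin 2) → ℝ) (hf_meas : Measurable f)
    (hf_nonneg : ∀ v, 0 ≤ f v)
    (P : Measure (EuclideanSpace ℝ (Fin 2)))
    (hP : P = volume.withDensity (fun v => ENNReal.ofReal (f v)))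
    (X : Set (EuclideanSpace ℝ (Fin 2)))
    (ℓ : ℝ → ℝ) (hℓ : ∀ d : ℝ, 0 ≤ d → 0 ≤ ℓ d)
    (N : Set (EuclideanSpace ℝ (Fin 2))) (hN : volume N = 0)
    (hcond : ∀ v ∉ N, ∀ v' ∉ N,
      v - v' ∈ {u : EuclideanSpace ℝ (Fin 2) | ∃ i ∈ X, ∃ j ∈ X, u = j - i} →
        f v ≤ Real.exp (ℓ ‖v - v'‖) * f v') :
    ∀ V : Set (EuclideanSpace ℝ (Fin 2)), MeasurableSet V →
      ∀ u ∈ {u : EuclideanSpace ℝ (Fin 2) | ∃ i ∈ X, ∃ j ∈ X, u = j - i},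
        P V ≤ ENNReal.ofReal (Real.exp (ℓ ‖u‖)) * P ((fun v => v + u) '' V) := by
  intro V hV u hu
  obtain ⟨i, hi, j, hj, hij⟩ := hu
  subst hP
  have hVmeas : MeasurableSet ((fun v => v + u) '' V) := by
    have := (MeasurableEquiv.addRight u).measurableEmbedding.measurableSet_image (s := V)
    simpa using this.mpr hV
  rw [withDensity_apply _ hV, withDensity_apply _ hVmeas]
  -- translate the right-hand integral
  have hmp : MeasurePreserving (fun v : EuclideanSpace ℝ (Fin 2) => v + u) volume volume :=
    measurePreserving_add_right volume u
  have htrans :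
      ∫⁻ b in (fun v => v + u) '' V, ENNReal.ofReal (f b) ∂volume
        = ∫⁻ a in V, ENNReal.ofReal (f (a + u)) ∂volume := by
    exact (hmp.setLIntegral_comp_emb (MeasurableEquiv.addRight u).measurableEmbedding
      (fun b => ENNReal.ofReal (f b)) V).symm
  have hm : Measurable fun a : EuclideanSpace ℝ (Fin 2) => ENNReal.ofReal (f (a + u)) :=
    (ENNReal.measurable_ofReal.comp hf_meas).comp (measurable_add_const u)
  rw [htrans, ← lintegral_const_mul _ hm]
  -- pointwise a.e. bound
  have hN' : volume ((fun v : EuclideanSpace ℝ (Fin 2) => v + u) ⁻¹' N) = 0 := by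
    rw [hmp.measure_preimage (NullMeasurableSet.of_null hN)]; exact hN
  apply setLIntegral_mono_ae
  · exact (hm.const_mul _).aemeasurable
  · filter_upwards [measure_eq_zero_iff_ae_notMem.mp hN,
      measure_eq_zero_iff_ae_notMem.mp hN'] with v hv hv' _
    have hmem : v - (v + u) ∈
        {w : EuclideanSpace ℝ (Fin 2) | ∃ i ∈ X, ∃ j ∈ X, w = j - i} := by
      refine ⟨j, hj, i, hi, ?_⟩
      rw [hij]; abel
    have := hcond v hv (v + u) hv' hmem
    have hnorm : ‖v - (v + u)‖ = ‖u‖ := by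
      rw [show v - (v + u) = -u by abel, norm_neg]
    rw [hnorm] at this
    calc ENNReal.ofReal (f v)
        ≤ ENNReal.ofReal (Real.exp (ℓ ‖u‖) * f (v + u)) := ENNReal.ofReal_le_ofReal this
      _ = ENNReal.ofReal (Real.exp (ℓ ‖u‖)) * ENNReal.ofReal (f (v + u)) :=
          ENNReal.ofReal_mul (Real.exp_pos _).le
end

section
/- Let X ⊆ ℝ² be a set of locations with V_X = {j − i : i, j ∈ X}, let ℓ : [0,∞) → [0,∞), and let R : [0,∞) → [0,∞) be measurable with the circular noise function f_R(v) = R(‖v‖) a probability density with respect to the Lebesgue measure on ℝ². Define D_X = {(‖v‖, ‖v′‖) : v, v′ ∈ ℝ², v′ − v ∈ V_X} and ℓ_X(r, r′) = inf { ℓ(‖v − v′‖) : ‖v‖ = r, ‖v′‖ = r′, v − v′ ∈ V_X }. Then the measure with density f_R satisfies ℓ-privacy on X (i.e., P(V) ≤ e^{ℓ(‖u‖)}·P(τ_u(V)) for all measurable V ⊆ ℝ² and all u ∈ V_X) if and only if there exists a set N′ ⊂ [0,∞) of one-dimensional Lebesgue measure zero such that for all r, r′ ∈ [0,∞) \ N′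 with (r, r′) ∈ D_X, R(r) ≤ e^{ℓ_X(r, r′)} · R(r′). -/
/-!
Privacy for a single shift `u` is equivalent to the bound `R ‖w‖ ≤ exp (ℓ ‖u‖) * R ‖w + u‖` for
almost every `w`, and the radial condition implies these bounds because `{w | ‖w‖ ∈ N'}` is null
whenever `N'` is. For the converse, the null sets for the uncountably many shifts must be traded
for a single null set of radii: the radii at which `R` is not approximately continuous. If the
bound failed at two such radii `r, r'`, then by density a product of level sets
`{R > a} ×ˢ {R < b}` would meet the open convex set of admissible pairs `(‖w‖, ‖w + u‖)` near
`(r, r')` in positive measure, although it is covered by the image of a null set of bad `w` under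
the map `w ↦ (‖w‖, ‖w + u‖)`, which is smooth there.
-/

open MeasureTheory Set Filter Metric Topology
open scoped ENNReal

section Translation

variable {G : Type*} [MeasurableSpace G] [AddGroup G] [MeasurableAdd G] {μ : Measure G}
  [μ.IsAddRightInvariant] {f : G → ℝ≥0∞}

theorem withDensity_image_add_right (u : G) {V : Set G} (hV : MeasurableSet V) :
    μ.withDensity f ((· + u) '' V) = ∫⁻ w in V, f (w + u) ∂μ := by
  have he : MeasurableEmbedding (· + u) := (MeasurableEquiv.addRight u).measurableEmbedding
  rw [withDensity_apply _ (he.measurableSet_image.2 hV)]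
  exact ((measurePreserving_add_right μ u).setLIntegral_comp_emb he f V).symm

theorem forall_withDensity_le_mul_image_add_right_iff [SigmaFinite μ] (hf : Measurable f)
    (u : G) (C : ℝ≥0∞) :
    (∀ V, MeasurableSet V → μ.withDensity f V ≤ C * μ.withDensity f ((· + u) '' V)) ↔
      ∀ᵐ w ∂μ, f w ≤ C * f (w + u) := by
  have hfu : Measurable fun w => f (w + u) := hf.comp (measurable_add_const u)
  have hiff : ∀ V, MeasurableSet V → (μ.withDensity f V ≤ C * μ.withDensity f ((· + u) '' V) ↔
      ∫⁻ w in V, f w ∂μ ≤ ∫⁻ w in V, C * f (w + u) ∂μ) := fun V hV => by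
    rw [withDensity_apply _ hV, withDensity_image_add_right u hV, lintegral_const_mul C hfu]
  refine ⟨fun h => ae_le_of_forall_setLIntegral_le_of_sigmaFinite hf fun V hV _ =>
    (hiff V hV).1 (h V hV), fun h V hV => (hiff V hV).2 ?_⟩
  exact setLIntegral_mono_ae (hfu.const_mul C).aemeasurable (h.mono fun w hw _ => hw)

theorem forall_withDensity_ofReal_le_mul_image_add_right_iff [SigmaFinite μ] {g : G → ℝ}
    (hg : Measurable g) (hg₀ : ∀ w, 0 ≤ g w) (u : G) {c : ℝ} (hc : 0 ≤ c) :
    (∀ V, MeasurableSet V → μ.withDensity (fun w => ENNReal.ofReal (g w)) V ≤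
        ENNReal.ofReal c * μ.withDensity (fun w => ENNReal.ofReal (g w)) ((· + u) '' V)) ↔
      ∀ᵐ w ∂μ, g w ≤ c * g (w + u) := by
  rw [forall_withDensity_le_mul_image_add_right_iff hg.ennreal_ofReal u]
  refine eventually_congr (Eventually.of_forall fun w => ?_)
  rw [← ENNReal.ofReal_mul hc, ENNReal.ofReal_le_ofReal_iff (mul_nonneg hc (hg₀ _))]

end Translation

theorem addHaar_preimage_norm_eq_zero {E : Type*} [NormedAddCommGroup E]
    [NormedSpace ℝ E] [Nontrivial E] [FiniteDimensional ℝ E] [MeasurableSpace E] [BorelSpace E]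
    (μ : Measure E) [μ.IsAddHaarMeasure] {N : Set ℝ} (hN : volume N = 0) :
    μ (norm ⁻¹' N) = 0 := by
  wlog hNm : MeasurableSet N generalizing N
  · exact measure_mono_null (preimage_mono (subset_toMeasurable _ _))
      (this (by rwa [measure_toMeasurable]) (measurableSet_toMeasurable _ _))
  have hpre : ((↑) : ({(0 : E)}ᶜ : Set E) → E) ⁻¹' (norm ⁻¹' N) =
      homeomorphUnitSphereProd E ⁻¹' (univ ×ˢ ((↑) ⁻¹' N)) := by
    ext x; simp
  have hIoi : Measure.volumeIoiPow (Module.finrank ℝ E - 1) ((↑) ⁻¹' N) = 0 := by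
    refine withDensity_absolutelyContinuous _ _ ?_
    rw [comap_subtype_coe_apply measurableSet_Ioi]
    exact measure_mono_null (image_preimage_subset _ _) hN
  rw [← restrict_compl_singleton (μ := μ) 0, Measure.restrict_apply (measurable_norm hNm),
    inter_comm, ← Subtype.image_preimage_coe,
    ← comap_subtype_coe_apply (measurableSet_singleton 0).compl,
    hpre, (Measure.measurePreserving_homeomorphUnitSphereProd μ).measure_preimage
      (MeasurableSet.univ.prod (measurable_subtype_coe hNm)).nullMeasurableSet,
    Measure.prod_prod, hIoi, mul_zero]

section Density

variable {α : Type*} [MetricSpace α] [MeasurableSpace α] {μ : Measure α}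

def HasDensityZeroAt (μ : Measure α) (s : Set α) (x : α) : Prop :=
  Tendsto (fun h => μ (s ∩ closedBall x h) / μ (closedBall x h)) (𝓝[>] 0) (𝓝 0)

theorem HasDensityZeroAt.mono {s t : Set α} {x : α} (ht : HasDensityZeroAt μ t x)
    (hst : s ⊆ t) : HasDensityZeroAt μ s x :=
  tendsto_of_tendsto_of_tendsto_of_le_of_le tendsto_const_nhds ht (fun _ => zero_le)
    fun _ => ENNReal.div_le_div_right (measure_mono (inter_subset_inter_left _ hst)) _

theorem HasDensityZeroAt.eventually_measure_inter_le {s : Set α} {x : α}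
    (hs : HasDensityZeroAt μ s x) {ε : ℝ≥0∞} (hε : ε ≠ 0) (hε' : ε ≠ ∞) :
    ∀ᶠ h in 𝓝[>] 0, μ (s ∩ closedBall x h) ≤ ε * μ (closedBall x h) :=
  (hs.eventually (eventually_lt_nhds (pos_iff_ne_zero.2 hε))).mono fun _ h =>
    (ENNReal.div_le_iff_le_mul (Or.inr hε') (Or.inr hε)).1 h.le

def ApproxContinuousAt (μ : Measure α) (f : α → ℝ) (x : α) : Prop :=
  (∀ a < f x, HasDensityZeroAt μ {y | f y ≤ a} x) ∧
    ∀ b > f x, HasDensityZeroAt μ {y | b ≤ f y} x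

variable [SecondCountableTopology α] [HasBesicovitchCovering α] [BorelSpace α]
  [IsLocallyFiniteMeasure μ]

theorem ae_hasDensityZeroAt {s : Set α} (hs : MeasurableSet s) :
    ∀ᵐ x ∂μ, x ∉ s → HasDensityZeroAt μ s x := by
  filter_upwards [Besicovitch.ae_tendsto_measure_inter_div_of_measurableSet μ hs] with x hx hxs
  simpa [HasDensityZeroAt, hxs] using hx

theorem ae_approxContinuousAt {f : α → ℝ} (hf : Measurable f) :
    ∀ᵐ x ∂μ, ApproxContinuousAt μ f x := by
  have hle : ∀ q : ℚ, ∀ᵐ x ∂μ, x ∉ {y | f y ≤ q} → HasDensityZeroAt μ {y | f y ≤ q} x :=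
    fun q => ae_hasDensityZeroAt (measurableSet_le hf measurable_const)
  have hge : ∀ q : ℚ, ∀ᵐ x ∂μ, x ∉ {y | q ≤ f y} → HasDensityZeroAt μ {y | q ≤ f y} x :=
    fun q => ae_hasDensityZeroAt (measurableSet_le measurable_const hf)
  filter_upwards [ae_all_iff.2 hle, ae_all_iff.2 hge] with x hxle hxge
  refine ⟨fun a ha => ?_, fun b hb => ?_⟩
  · obtain ⟨q, haq, hqx⟩ := exists_rat_btwn ha
    exact (hxle q (not_le.2 hqx)).mono fun y hy => hy.out.trans haq.le
  · obtain ⟨q, hxq, hqb⟩ := exists_rat_btwn hb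
    exact (hxge q (not_le.2 hxq)).mono fun y hy => hqb.le.trans hy.out

end Density

theorem volume_prod_inter_pos {P Q : Set ℝ} {Ω : Set (ℝ × ℝ)} {x y c : ℝ} (hc : 0 < c)
    (hP : HasDensityZeroAt volume Pᶜ x) (hQ : HasDensityZeroAt volume Qᶜ y)
    (hΩ : ∀ᶠ h in 𝓝[>] 0, ENNReal.ofReal (c * h ^ 2) ≤ volume (Ω ∩ closedBall (x, y) h)) :
    0 < volume (P ×ˢ Q ∩ Ω) := by
  rw [pos_iff_ne_zero]
  intro hzero
  -- with `ε = c / 16` the two slabs covering the box outside `P ×ˢ Q` have measure `≤ c h² / 2`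
  have hε : ENNReal.ofReal (c / 16) ≠ 0 := (ENNReal.ofReal_pos.2 (by positivity)).ne'
  obtain ⟨h, hhΩ, hhP, hhQ, hh⟩ :=
    (hΩ.and ((hP.eventually_measure_inter_le hε ENNReal.ofReal_ne_top).and
      ((hQ.eventually_measure_inter_le hε ENNReal.ofReal_ne_top).and self_mem_nhdsWithin))).exists
  have hh : 0 < h := hh
  have hcover : Ω ∩ closedBall (x, y) h ⊆ P ×ˢ Q ∩ Ω ∪
      ((Pᶜ ∩ closedBall x h) ×ˢ closedBall y h ∪ closedBall x h ×ˢ (Qᶜ ∩ closedBall y h)) := by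
    rw [← closedBall_prod_same]
    rintro ⟨a, b⟩ ⟨hab, ha, hb⟩
    by_cases haP : a ∈ P <;> by_cases hbQ : b ∈ Q <;> simp_all
  have hle : ENNReal.ofReal (c * h ^ 2) ≤ ENNReal.ofReal (c * h ^ 2 / 2) :=
    calc ENNReal.ofReal (c * h ^ 2) ≤ volume (Ω ∩ closedBall (x, y) h) := hhΩ
      _ ≤ volume (P ×ˢ Q ∩ Ω) + (volume ((Pᶜ ∩ closedBall x h) ×ˢ closedBall y h) +
            volume (closedBall x h ×ˢ (Qᶜ ∩ closedBall y h))) :=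
          (measure_mono hcover).trans
            ((measure_union_le _ _).trans (add_le_add le_rfl (measure_union_le _ _)))
      _ ≤ 0 + (ENNReal.ofReal (c / 16) * ENNReal.ofReal (2 * h) * ENNReal.ofReal (2 * h) +
            ENNReal.ofReal (2 * h) * (ENNReal.ofReal (c / 16) * ENNReal.ofReal (2 * h))) := by
          rw [hzero, Measure.volume_eq_prod, Measure.prod_prod, Measure.prod_prod]
          simp only [Real.volume_closedBall] at hhP hhQ ⊢
          gcongr
      _ = ENNReal.ofReal (c * h ^ 2 / 2) := by
          rw [zero_add, ← ENNReal.ofReal_mul (by positivity), ← ENNReal.ofReal_mul (by positivity),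
            ← ENNReal.ofReal_mul (by positivity),
            ← ENNReal.ofReal_add (by positivity) (by positivity)]
          ring_nf
  rw [ENNReal.ofReal_le_ofReal_iff (by positivity)] at hle
  nlinarith [mul_pos hc (pow_pos hh 2)]

theorem Convex.exists_pos_ofReal_mul_pow_le_measure_inter_closedBall {E : Type*}
    [NormedAddCommGroup E] [NormedSpace ℝ E] [MeasurableSpace E] [BorelSpace E]
    [FiniteDimensional ℝ E] (μ : Measure E) [μ.IsAddHaarMeasure] {s : Set E} (hs : Convex ℝ s)
    (hint : (interior s).Nonempty) {x : E} (hx : x ∈ closure s) :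
    ∃ c : ℝ, 0 < c ∧ ∀ᶠ h in 𝓝[>] 0,
      ENNReal.ofReal (c * h ^ Module.finrank ℝ E) ≤ μ (s ∩ closedBall x h) := by
  obtain ⟨y, hy⟩ := hint
  obtain ⟨ρ, hρ, hball⟩ := Metric.isOpen_iff.1 isOpen_interior y hy
  set D := dist y x + ρ
  have hD : 0 < D := add_pos_of_nonneg_of_pos dist_nonneg hρ
  have hB : 0 < μ.real (ball y ρ) :=
    ENNReal.toReal_pos (measure_ball_pos μ y hρ).ne' measure_ball_lt_top.ne
  refine ⟨μ.real (ball y ρ) / D ^ Module.finrank ℝ E, by positivity, ?_⟩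
  filter_upwards [Ioo_mem_nhdsGT hD] with h ⟨h0, hhD⟩
  set t := h / D
  have ht : t ∈ Ioc 0 1 := ⟨div_pos h0 hD, (div_le_one hD).2 hhD.le⟩
  have hsub : AffineMap.homothety x t '' ball y ρ ⊆ s ∩ closedBall x h := by
    rintro _ ⟨z, hz, rfl⟩
    rw [AffineMap.homothety_apply, vsub_eq_sub, vadd_eq_add, add_comm]
    refine ⟨interior_subset (hs.add_smul_sub_mem_interior' hx (hball hz) ht), ?_⟩
    rw [mem_closedBall, dist_eq_norm, add_sub_cancel_left, norm_smul,
      Real.norm_of_nonneg ht.1.le]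
    calc t * ‖z - x‖ ≤ t * D := by
          gcongr
          rw [← dist_eq_norm]
          exact (dist_triangle z y x).trans (by rw [mem_ball] at hz; linarith)
      _ = h := div_mul_cancel₀ h hD.ne'
  calc ENNReal.ofReal (μ.real (ball y ρ) / D ^ Module.finrank ℝ E * h ^ Module.finrank ℝ E)
        = ENNReal.ofReal |t ^ Module.finrank ℝ E| * μ (ball y ρ) := by
          rw [abs_of_pos (pow_pos ht.1 _), ← ofReal_measureReal measure_ball_lt_top.ne,
            ← ENNReal.ofReal_mul (by positivity), div_pow]
          ring_nf
    _ = μ (AffineMap.homothety x t '' ball y ρ) := (Measure.addHaar_image_homothety μ x t _).symm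
    _ ≤ μ (s ∩ closedBall x h) := measure_mono hsub

/-- For `s = ‖u‖ > 0`, these are the pairs `(‖w‖, ‖w + u‖)` with `w` off the line `ℝ ∙ u`. -/
def triangleSides (s : ℝ) : Set (ℝ × ℝ) :=
  {p | p.1 < p.2 + s ∧ p.2 < p.1 + s ∧ s < p.1 + p.2}

theorem isOpen_triangleSides (s : ℝ) : IsOpen (triangleSides s) := by
  simp only [triangleSides, ofPred_and]
  exact (isOpen_lt (by fun_prop) (by fun_prop)).inter
    ((isOpen_lt (by fun_prop) (by fun_prop)).inter (isOpen_lt (by fun_prop) (by fun_prop)))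

theorem convex_triangleSides (s : ℝ) : Convex ℝ (triangleSides s) := by
  refine convex_iff_forall_pos.2 fun p hp q hq a b ha hb hab => ?_
  simp only [triangleSides, mem_ofPred_eq, Prod.fst_add, Prod.snd_add, Prod.smul_fst,
    Prod.smul_snd, smul_eq_mul] at hp hq ⊢
  refine ⟨?_, ?_, ?_⟩ <;> nlinarith [mul_pos ha (sub_pos.2 hp.1), mul_pos hb (sub_pos.2 hq.1),
    mul_pos ha (sub_pos.2 hp.2.1), mul_pos hb (sub_pos.2 hq.2.1),
    mul_pos ha (sub_pos.2 hp.2.2), mul_pos hb (sub_pos.2 hq.2.2)]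

theorem pos_of_mem_triangleSides {s : ℝ} {p : ℝ × ℝ} (hp : p ∈ triangleSides s) :
    0 < p.1 ∧ 0 < p.2 := by
  obtain ⟨h₁, h₂, h₃⟩ := hp
  constructor <;> linarith

theorem mem_closure_triangleSides {s r r' : ℝ} (hs : 0 < s) (h₁ : |r - r'| ≤ s)
    (h₂ : s ≤ r + r') : (r, r') ∈ closure (triangleSides s) := by
  have hlim :
      Tendsto (fun t : ℝ => (r, r') + t • ((s, s) - (r, r'))) (𝓝[>] 0) (𝓝 (r, r')) := by
    refine (Continuous.tendsto' (by fun_prop) 0 _ ?_).mono_left nhdsWithin_le_nhds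
    simp
  refine mem_closure_of_tendsto hlim ?_
  filter_upwards [Ioo_mem_nhdsGT one_pos] with t ⟨ht0, ht1⟩
  obtain ⟨h₃, h₄⟩ := abs_le.1 h₁
  simp only [triangleSides, mem_ofPred_eq, Prod.fst_add, Prod.snd_add, Prod.smul_fst,
    Prod.smul_snd, Prod.fst_sub, Prod.snd_sub, smul_eq_mul]
  refine ⟨by nlinarith, by nlinarith, by nlinarith⟩

theorem exists_norm_eq_norm_add_eq {E : Type*} [NormedAddCommGroup E] [NormedSpace ℝ E]
    (hE : 1 < Module.rank ℝ E) {u : E} (hu : u ≠ 0) {a b : ℝ} (h₁ : |a - b| ≤ ‖u‖)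
    (h₂ : ‖u‖ ≤ a + b) : ∃ w, ‖w‖ = a ∧ ‖w + u‖ = b := by
  obtain ⟨h₃, h₄⟩ := abs_le.1 h₁
  have ha : 0 ≤ a := by linarith
  have hs : 0 < ‖u‖ := norm_pos_iff.2 hu
  have hnorm : ∀ c : ℝ, ‖c • u‖ = |c| * ‖u‖ := fun c => by rw [norm_smul, Real.norm_eq_abs]
  have hmem : ∀ c : ℝ, |c| = a / ‖u‖ → c • u ∈ sphere (0 : E) a := fun c hc => by
    rw [mem_sphere_zero_iff_norm, hnorm, hc, div_mul_cancel₀ _ hs.ne']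
  have hlo : ‖-(a / ‖u‖) • u + u‖ = |‖u‖ - a| :=
    calc ‖-(a / ‖u‖) • u + u‖ = ‖(1 - a / ‖u‖) • u‖ := by congr 1; module
      _ = |‖u‖ - a| := by rw [hnorm, ← abs_norm u, ← abs_mul, abs_norm, sub_mul, one_mul,
            div_mul_cancel₀ _ hs.ne']
  have hhi : ‖(a / ‖u‖) • u + u‖ = a + ‖u‖ :=
    calc ‖(a / ‖u‖) • u + u‖ = ‖(a / ‖u‖ + 1) • u‖ := by congr 1; module
      _ = a + ‖u‖ := by rw [hnorm, abs_of_nonneg (by positivity), add_mul, one_mul,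
            div_mul_cancel₀ _ hs.ne']
  have hb : b ∈ Icc ‖-(a / ‖u‖) • u + u‖ ‖(a / ‖u‖) • u + u‖ := by
    rw [hlo, hhi, mem_Icc, abs_le]
    constructor <;> [constructor; skip] <;> linarith
  obtain ⟨w, hw, hwb⟩ := (isConnected_sphere hE 0 ha).isPreconnected.intermediate_value
    (hmem (-(a / ‖u‖)) (by rw [abs_neg, abs_of_nonneg (by positivity)]))
    (hmem (a / ‖u‖) (abs_of_nonneg (by positivity)))
    (continuous_norm.comp (continuous_add_const u)).continuousOn hb
  exact ⟨w, mem_sphere_zero_iff_norm.1 hw, hwb⟩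

theorem volume_inter_triangleSides_eq_zero {u : EuclideanSpace ℝ (Fin 2)} (hu : u ≠ 0)
    {A : Set (ℝ × ℝ)} (hA : volume {w : EuclideanSpace ℝ (Fin 2) | (‖w‖, ‖w + u‖) ∈ A} = 0) :
    volume (A ∩ triangleSides ‖u‖) = 0 := by
  let L : (ℝ × ℝ) ≃L[ℝ] EuclideanSpace ℝ (Fin 2) :=
    (ContinuousLinearEquiv.finTwoArrow ℝ ℝ).symm.trans (EuclideanSpace.equiv (Fin 2) ℝ).symm
  have hL : MeasurePreserving L :=
    (PiLp.volume_preserving_toLp (Fin 2)).comp (volume_preserving_finTwoArrow ℝ).symm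
  set S := L ⁻¹' {w | (‖w‖, ‖w + u‖) ∈ A ∩ triangleSides ‖u‖}
  have hS : volume S = 0 :=
    hL.quasiMeasurePreserving.preimage_null (measure_mono_null (fun w hw => hw.1) hA)
  have hdiff : DifferentiableOn ℝ (fun p => (‖L p‖, ‖L p + u‖)) S := fun p hp => by
    obtain ⟨h₁, h₂⟩ := pos_of_mem_triangleSides hp.2
    exact ((L.differentiableAt.norm ℝ (norm_pos_iff.1 h₁)).prodMk
      ((L.differentiableAt.add_const u).norm ℝ (norm_pos_iff.1 h₂))).differentiableWithinAt
  refine measure_mono_null ?_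
    (MeasureTheory.addHaar_image_eq_zero_of_differentiableOn_of_addHaar_eq_zero volume hdiff hS)
  rintro ⟨a, b⟩ hab
  obtain ⟨h₁, h₂, h₃⟩ := hab.2
  obtain ⟨w, rfl, rfl⟩ := exists_norm_eq_norm_add_eq
    (Module.one_lt_rank_of_one_lt_finrank (by simp)) hu (abs_le.2 ⟨by linarith, by linarith⟩)
    h₃.le
  exact ⟨L.symm w, by simpa [S] using hab, by simp⟩

theorem le_mul_of_ae_le_of_approxContinuousAt {R : ℝ → ℝ} {c : ℝ} (hc : 0 ≤ c)
    {u : EuclideanSpace ℝ (Fin 2)} (hu : u ≠ 0)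
    (hae : ∀ᵐ w : EuclideanSpace ℝ (Fin 2), R ‖w‖ ≤ c * R ‖w + u‖)
    {v : EuclideanSpace ℝ (Fin 2)} (hv : ApproxContinuousAt volume R ‖v‖)
    (hvu : ApproxContinuousAt volume R ‖v + u‖) :
    R ‖v‖ ≤ c * R ‖v + u‖ := by
  by_contra! h
  have hb : ∀ᶠ b in 𝓝[>] R ‖v + u‖, c * b < R ‖v‖ :=
    nhdsWithin_le_nhds (((continuous_const_mul c).tendsto _).eventually (eventually_lt_nhds h))
  obtain ⟨b, hcb, hb⟩ := (hb.and self_mem_nhdsWithin).exists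
  obtain ⟨a, hca, ha⟩ := exists_between hcb
  have hnull : volume ({t | a < R t} ×ˢ {t | R t < b} ∩ triangleSides ‖u‖) = 0 := by
    refine volume_inter_triangleSides_eq_zero hu (measure_mono_null ?_ (ae_iff.1 hae))
    rintro w ⟨hw₁, hw₂⟩
    exact not_le.2 ((mul_le_mul_of_nonneg_left (le_of_lt hw₂) hc).trans_lt (hca.trans hw₁))
  have hs : 0 < ‖u‖ := norm_pos_iff.2 hu
  have hint : (interior (triangleSides ‖u‖)).Nonempty := by
    rw [(isOpen_triangleSides _).interior_eq]
    exact ⟨(‖u‖, ‖u‖), by linarith, by linarith, by linarith⟩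
  obtain ⟨κ, hκ, hdens⟩ := Convex.exists_pos_ofReal_mul_pow_le_measure_inter_closedBall volume
    (convex_triangleSides ‖u‖) hint (mem_closure_triangleSides hs
      (by simpa [norm_sub_rev] using abs_norm_sub_norm_le v (v + u))
      (by simpa [add_comm] using norm_sub_le (v + u) v))
  refine (volume_prod_inter_pos hκ ?_ ?_ (by simpa using hdens)).ne' hnull
  · simpa [compl_ofPred, not_lt] using hv.1 a ha
  · simpa [compl_ofPred, not_lt] using hvu.2 b hb

theorem le_exp_sInf_mul {S : Set ℝ} (hne : S.Nonempty) (hbdd : BddBelow S) {a b : ℝ}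
    (hb : 0 ≤ b) (h : ∀ z ∈ S, a ≤ Real.exp z * b) : a ≤ Real.exp (sInf S) * b := by
  rw [Monotone.map_csInf_of_continuousAt (f := fun z => Real.exp z * b) (by fun_prop)
    (fun _ _ hxy => mul_le_mul_of_nonneg_right (Real.exp_le_exp.2 hxy) hb) hne hbdd]
  exact le_csInf (hne.image _) (forall_mem_image.2 h)

theorem le_exp_sInf_mul_of_approxContinuousAt {D : Set (EuclideanSpace ℝ (Fin 2))}
    (hD : ∀ u ∈ D, -u ∈ D) {ℓ : ℝ → ℝ} (hℓ : ∀ d, 0 ≤ d → 0 ≤ ℓ d) {R : ℝ → ℝ}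
    (hR : ∀ r, 0 ≤ r → 0 ≤ R r)
    (hae : ∀ u ∈ D, ∀ᵐ w : EuclideanSpace ℝ (Fin 2), R ‖w‖ ≤ Real.exp (ℓ ‖u‖) * R ‖w + u‖)
    {v v' : EuclideanSpace ℝ (Fin 2)} (hvv' : v' - v ∈ D)
    (hv : ApproxContinuousAt volume R ‖v‖) (hv' : ApproxContinuousAt volume R ‖v'‖) :
    R ‖v‖ ≤ Real.exp (sInf {z : ℝ | ∃ w w' : EuclideanSpace ℝ (Fin 2),
      ‖w‖ = ‖v‖ ∧ ‖w'‖ = ‖v'‖ ∧ w - w' ∈ D ∧ z = ℓ ‖w - w'‖}) * R ‖v'‖ := by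
  refine le_exp_sInf_mul ?_ ?_ (hR _ (norm_nonneg _)) ?_
  · exact ⟨_, v, v', rfl, rfl, by simpa using hD _ hvv', rfl⟩
  · exact ⟨0, by rintro _ ⟨w, w', -, -, -, rfl⟩; exact hℓ _ (norm_nonneg _)⟩
  rintro _ ⟨w, w', hw, hw', hww', rfl⟩
  rw [← hw, ← hw', norm_sub_rev]
  rw [← hw] at hv
  rw [← hw'] at hv'
  rcases eq_or_ne (w' - w) 0 with h0 | h0
  · rw [h0, norm_zero, sub_eq_zero.1 h0]
    exact le_mul_of_one_le_left (hR _ (norm_nonneg _)) (Real.one_le_exp (hℓ _ le_rfl))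
  · simpa using le_mul_of_ae_le_of_approxContinuousAt (Real.exp_pos _).le h0
      (hae _ (by simpa using hD _ hww')) hv (by simpa using hv')

theorem l_privacy_circular_noise_iff_general
    (X : Set (EuclideanSpace ℝ (Fin 2)))
    (ℓ : ℝ → ℝ) (hℓ_nonneg : ∀ d : ℝ, 0 ≤ d → 0 ≤ ℓ d)
    (R : ℝ → ℝ) (hR_meas : Measurable R) (hR_nonneg : ∀ r, 0 ≤ r → 0 ≤ R r) :
    (∀ V : Set (EuclideanSpace ℝ (Fin 2)), MeasurableSet V →
      ∀ u ∈ {u : EuclideanSpace ℝ (Fin 2) | ∃ i ∈ X, ∃ j ∈ X, u = j - i},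
        (volume.withDensity (fun v : EuclideanSpace ℝ (Fin 2) => ENNReal.ofReal (R ‖v‖))) V
          ≤ ENNReal.ofReal (Real.exp (ℓ ‖u‖)) *
            (volume.withDensity (fun v : EuclideanSpace ℝ (Fin 2) => ENNReal.ofReal (R ‖v‖)))
              ((fun v => v + u) '' V))
      ↔
    (∃ N' : Set ℝ, N' ⊆ Set.Ici (0 : ℝ) ∧ volume N' = 0 ∧
      ∀ r ∈ Set.Ici (0 : ℝ) \ N', ∀ r' ∈ Set.Ici (0 : ℝ) \ N',
        (r, r') ∈ {p : ℝ × ℝ | ∃ v v' : EuclideanSpace ℝ (Fin 2),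
            p.1 = ‖v‖ ∧ p.2 = ‖v'‖ ∧
            v' - v ∈ {u : EuclideanSpace ℝ (Fin 2) | ∃ i ∈ X, ∃ j ∈ X, u = j - i}} →
          R r ≤ Real.exp (sInf {z : ℝ | ∃ v v' : EuclideanSpace ℝ (Fin 2),
              ‖v‖ = r ∧ ‖v'‖ = r' ∧
              v - v' ∈ {u : EuclideanSpace ℝ (Fin 2) | ∃ i ∈ X, ∃ j ∈ X, u = j - i} ∧
              z = ℓ ‖v - v'‖}) * R r') := by
  set D := {u : EuclideanSpace ℝ (Fin 2) | ∃ i ∈ X, ∃ j ∈ X, u = j - i}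
  have hD : ∀ u ∈ D, -u ∈ D := by
    rintro _ ⟨i, hi, j, hj, rfl⟩
    exact ⟨j, hj, i, hi, neg_sub j i⟩
  have hpriv := fun u => forall_withDensity_ofReal_le_mul_image_add_right_iff (μ := volume)
    (hR_meas.comp measurable_norm)
    (fun w : EuclideanSpace ℝ (Fin 2) => hR_nonneg _ (norm_nonneg w)) u (Real.exp_pos (ℓ ‖u‖)).le
  refine ⟨fun h => ?_, fun ⟨N', _, hN', hN'R⟩ V hV u hu => (hpriv u).2 ?_ V hV⟩
  · refine ⟨Ici 0 ∩ {r | ¬ ApproxContinuousAt volume R r}, inter_subset_left,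
      measure_mono_null inter_subset_right (ae_approxContinuousAt hR_meas), ?_⟩
    rintro _ ⟨hr₀, hr⟩ _ ⟨hr'₀, hr'⟩ ⟨v, v', rfl, rfl, hvv'⟩
    exact le_exp_sInf_mul_of_approxContinuousAt hD hℓ_nonneg hR_nonneg
      (fun u hu => (hpriv u).1 fun V hV => h V hV u hu) hvv'
      (not_not.1 fun h => hr ⟨hr₀, h⟩) (not_not.1 fun h => hr' ⟨hr'₀, h⟩)
  · have hnorm : ∀ᵐ w : EuclideanSpace ℝ (Fin 2), ‖w‖ ∉ N' :=
      measure_eq_zero_iff_ae_notMem.1 (addHaar_preimage_norm_eq_zero volume hN')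
    filter_upwards [hnorm, (measurePreserving_add_right volume u).quasiMeasurePreserving.ae hnorm]
      with w hw hwu
    refine (hN'R _ ⟨norm_nonneg _, hw⟩ _ ⟨norm_nonneg _, hwu⟩
      ⟨w, w + u, rfl, rfl, by simpa using hu⟩).trans ?_
    refine mul_le_mul_of_nonneg_right (Real.exp_le_exp.2 (csInf_le ?_ ?_))
      (hR_nonneg _ (norm_nonneg _))
    · exact ⟨0, by rintro _ ⟨v, v', -, -, -, rfl⟩; exact hℓ_nonneg _ (norm_nonneg _)⟩
    · exact ⟨w, w + u, rfl, rfl, by simpa using hD u hu, by simp⟩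

/-- `ℓ`-privacy of circular noise functions. The measure with circular
density `v ↦ R ‖v‖` satisfies `ℓ`-privacy on `X` iff there is a set `N'` of
one-dimensional Lebesgue measure zero such that
`R r ≤ exp (ℓ_X (r, r')) * R r'` for all `r, r' ∈ [0, ∞) \ N'` with `(r, r') ∈ D_X`. -/
theorem l_privacy_circular_noise_iff
    (X : Set (EuclideanSpace ℝ (Fin 2)))
    (ℓ : ℝ → ℝ) (hℓ_nonneg : ∀ d : ℝ, 0 ≤ d → 0 ≤ ℓ d)
    (R : ℝ → ℝ) (hR_meas : Measurable R) (hR_nonneg : ∀ r, 0 ≤ r → 0 ≤ R r)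
    (hR_density : ∫⁻ v : EuclideanSpace ℝ (Fin 2),
        ENNReal.ofReal (R ‖v‖) ∂volume = 1) :
    (∀ V : Set (EuclideanSpace ℝ (Fin 2)), MeasurableSet V →
      ∀ u ∈ {u : EuclideanSpace ℝ (Fin 2) | ∃ i ∈ X, ∃ j ∈ X, u = j - i},
        (volume.withDensity (fun v : EuclideanSpace ℝ (Fin 2) => ENNReal.ofReal (R ‖v‖))) V
          ≤ ENNReal.ofReal (Real.exp (ℓ ‖u‖)) *
            (volume.withDensity (fun v : EuclideanSpace ℝ (Fin 2) => ENNReal.ofReal (R ‖v‖)))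
              ((fun v => v + u) '' V))
      ↔
    (∃ N' : Set ℝ, N' ⊆ Set.Ici (0 : ℝ) ∧ volume N' = 0 ∧
      ∀ r ∈ Set.Ici (0 : ℝ) \ N', ∀ r' ∈ Set.Ici (0 : ℝ) \ N',
        (r, r') ∈ {p : ℝ × ℝ | ∃ v v' : EuclideanSpace ℝ (Fin 2),
            p.1 = ‖v‖ ∧ p.2 = ‖v'‖ ∧
            v' - v ∈ {u : EuclideanSpace ℝ (Fin 2) | ∃ i ∈ X, ∃ j ∈ X, u = j - i}} →
          R r ≤ Real.exp (sInf {z : ℝ | ∃ v v' : EuclideanSpace ℝ (Fin 2),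
              ‖v‖ = r ∧ ‖v'‖ = r' ∧
              v - v' ∈ {u : EuclideanSpace ℝ (Fin 2) | ∃ i ∈ X, ∃ j ∈ X, u = j - i} ∧
              z = ℓ ‖v - v'‖}) * R r') :=
  l_privacy_circular_noise_iff_general X ℓ hℓ_nonneg R hR_meas hR_nonneg
end

section
/- Let f : ℝ² → [0,∞) be a probability density with respect to the Lebesgue measure λ on ℝ², let loss : [0,∞) → [0,∞) be measurable, and define R(r) = (1/(2π)) ∫₀^{2π} f(r cos θ, r sin θ) dθ. Then the circularized density f_R(v) = R(‖v‖) has the same expected loss as f: ∫_{ℝ²} R(‖v‖) · loss(‖v‖) dλ(v) = ∫_{ℝ²} f(v) · loss(‖v‖) dλ(v). -/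
/-! In polar coordinates `dλ = r dr dθ`, and on the circle of radius `r` the loss is the
constant `loss r`. So both sides reduce to `∫ r · loss r · (∫ f(r, θ) dθ) dr`, because the
circle integral of `f` is `2π R r` — as long as it is finite, which `∫ f = 1` guarantees for
almost every `r` (otherwise the Bochner integral defining `R r` is `0`). -/

open MeasureTheory Real Set Function
open scoped ENNReal

theorem MeasureTheory.StronglyMeasurable.intervalIntegral_prod_right {α E : Type*}
    [MeasurableSpace α] [NormedAddCommGroup E] [NormedSpace ℝ E] {F : α → ℝ → E}
    (hF : StronglyMeasurable (uncurry F)) (a b : ℝ) :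
    StronglyMeasurable fun x => ∫ θ in a..b, F x θ :=
  hF.integral_prod_right.sub hF.integral_prod_right

theorem Function.Periodic.ofReal_intervalIntegral_eq_setLIntegral {φ : ℝ → ℝ} {T : ℝ}
    (hφ : Periodic φ T) (hT : 0 ≤ T) (hφ_meas : AEStronglyMeasurable φ) (hφ_nonneg : 0 ≤ φ)
    (a : ℝ) (hfin : ∫⁻ θ in Ioo a (a + T), ENNReal.ofReal (φ θ) ≠ ⊤) :
    ENNReal.ofReal (∫ θ in 0..T, φ θ) = ∫⁻ θ in Ioo a (a + T), ENNReal.ofReal (φ θ) := by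
  have hshift := hφ.intervalIntegral_add_eq 0 a
  rw [zero_add] at hshift
  have hint : IntegrableOn φ (Ioo a (a + T)) :=
    ⟨hφ_meas.restrict, (hasFiniteIntegral_iff_ofReal (.of_forall hφ_nonneg)).2 hfin.lt_top⟩
  rw [hshift, intervalIntegral.integral_of_le (by linarith), integral_Ioc_eq_integral_Ioo,
    ofReal_integral_eq_lintegral_ofReal hint (.of_forall hφ_nonneg)]

noncomputable def polarPoint (r θ : ℝ) : EuclideanSpace ℝ (Fin 2) := !₂[r * cos θ, r * sin θ]

theorem norm_polarPoint {r : ℝ} (hr : 0 ≤ r) (θ : ℝ) : ‖polarPoint r θ‖ = r := by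
  rw [EuclideanSpace.norm_eq, Fin.sum_univ_two]
  simp [polarPoint, mul_pow, ← mul_add, sqrt_sq hr]

theorem periodic_polarPoint (r : ℝ) : Periodic (polarPoint r) (2 * π) := by
  intro θ
  simp [polarPoint]

theorem measurable_polarPoint : Measurable (uncurry polarPoint) := by
  unfold polarPoint
  fun_prop

theorem lintegral_eq_lintegral_polarPoint {h : EuclideanSpace ℝ (Fin 2) → ℝ≥0∞}
    (hh : Measurable h) :
    ∫⁻ v, h v = ∫⁻ r in Ioi 0, ENNReal.ofReal r * ∫⁻ θ in Ioo (-π) π, h (polarPoint r θ) := by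
  let e : EuclideanSpace ℝ (Fin 2) ≃ᵐ ℝ × ℝ :=
    (MeasurableEquiv.toLp 2 (Fin 2 → ℝ)).symm.trans MeasurableEquiv.finTwoArrow
  have he : MeasurePreserving e :=
    (volume_preserving_finTwoArrow ℝ).comp
      (EuclideanSpace.volume_preserving_symm_measurableEquiv_toLp (Fin 2))
  have htarget : polarCoord.target = Ioi 0 ×ˢ Ioo (-π) π := rfl
  have hsymm : ∀ p, e.symm (polarCoord.symm p) = polarPoint p.1 p.2 := fun _ => rfl
  have hmeas : Measurable fun p : ℝ × ℝ => ENNReal.ofReal p.1 * h (polarPoint p.1 p.2) :=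
    measurable_fst.ennreal_ofReal.mul (hh.comp measurable_polarPoint)
  rw [← (he.symm e).lintegral_comp hh, ← lintegral_comp_polarCoord_symm, htarget,
    Measure.volume_eq_prod, ← Measure.prod_restrict]
  simp only [hsymm, smul_eq_mul]
  rw [lintegral_prod _ hmeas.aemeasurable]
  refine lintegral_congr fun r => ?_
  dsimp only
  exact lintegral_const_mul _ (hh.comp measurable_polarPoint.of_uncurry_left)

theorem lintegral_mul_comp_norm_eq_lintegral_polarPoint {h : EuclideanSpace ℝ (Fin 2) → ℝ≥0∞}
    {k : ℝ → ℝ≥0∞} (hh : Measurable h) (hk : Measurable k) :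
    ∫⁻ v, h v * k ‖v‖ =
      ∫⁻ r in Ioi 0, ENNReal.ofReal r * k r * ∫⁻ θ in Ioo (-π) π, h (polarPoint r θ) := by
  rw [lintegral_eq_lintegral_polarPoint (by fun_prop)]
  refine setLIntegral_congr_fun measurableSet_Ioi fun r hr => ?_
  simp only [norm_polarPoint (le_of_lt hr)]
  rw [lintegral_mul_const (f := fun θ => h (polarPoint r θ)) _
      (hh.comp measurable_polarPoint.of_uncurry_left),
    mul_assoc, mul_comm (k r)]

theorem ae_lintegral_polarPoint_ne_top {h : EuclideanSpace ℝ (Fin 2) → ℝ≥0∞}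
    (hh : Measurable h) (hfin : ∫⁻ v, h v ≠ ⊤) :
    ∀ᵐ r ∂volume.restrict (Ioi 0), ∫⁻ θ in Ioo (-π) π, h (polarPoint r θ) ≠ ⊤ := by
  rw [lintegral_eq_lintegral_polarPoint hh] at hfin
  have hcircle : Measurable fun r => ∫⁻ θ in Ioo (-π) π, h (polarPoint r θ) :=
    Measurable.lintegral_prod_right (f := fun r θ => h (polarPoint r θ))
      (hh.comp measurable_polarPoint)
  filter_upwards [ae_lt_top (measurable_id.ennreal_ofReal.mul hcircle) hfin,
    ae_restrict_mem measurableSet_Ioi] with r hr_fin hr_pos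
  exact (ENNReal.lt_top_of_mul_ne_top_right hr_fin.ne (ENNReal.ofReal_pos.2 hr_pos).ne').ne

noncomputable def circularization (f : EuclideanSpace ℝ (Fin 2) → ℝ) (r : ℝ) : ℝ :=
  (1 / (2 * π)) * ∫ θ in 0..2 * π, f (polarPoint r θ)

section circularization

variable {f : EuclideanSpace ℝ (Fin 2) → ℝ}

theorem measurable_circularization (hf : Measurable f) : Measurable (circularization f) :=
  ((StronglyMeasurable.intervalIntegral_prod_right (F := fun r θ => f (polarPoint r θ))
    (hf.comp measurable_polarPoint).stronglyMeasurable 0 (2 * π)).measurable).const_mul _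

theorem circularization_nonneg (hf : 0 ≤ f) (r : ℝ) : 0 ≤ circularization f r :=
  mul_nonneg (by positivity) (intervalIntegral.integral_nonneg (by positivity) fun _ _ => hf _)

theorem ofReal_two_pi_mul_circularization (hf_meas : Measurable f) (hf_nonneg : 0 ≤ f) {r : ℝ}
    (hfin : ∫⁻ θ in Ioo (-π) π, ENNReal.ofReal (f (polarPoint r θ)) ≠ ⊤) :
    ENNReal.ofReal (2 * π) * ENNReal.ofReal (circularization f r) =
      ∫⁻ θ in Ioo (-π) π, ENNReal.ofReal (f (polarPoint r θ)) := by
  have hπ : -π + 2 * π = π := by ring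
  have hperiodic := ((periodic_polarPoint r).comp f).ofReal_intervalIntegral_eq_setLIntegral
    (by positivity) (hf_meas.comp measurable_polarPoint.of_uncurry_left).aestronglyMeasurable
    (fun _ => hf_nonneg _) (-π) (by rwa [hπ])
  rw [hπ] at hperiodic
  rw [← ENNReal.ofReal_mul (by positivity), circularization, ← mul_assoc,
    mul_one_div_cancel (by positivity), one_mul]
  exact hperiodic

end circularization

theorem circularized_density_same_expected_loss_general
    (f : EuclideanSpace ℝ (Fin 2) → ℝ) (hf_meas : Measurable f)
    (hf_nonneg : ∀ v, 0 ≤ f v)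
    (hf_density : ∫⁻ v : EuclideanSpace ℝ (Fin 2), ENNReal.ofReal (f v) ∂volume = 1)
    (loss : ℝ → ℝ) (hloss_meas : Measurable loss)
    (R : ℝ → ℝ)
    (hR : ∀ r : ℝ, R r = (1 / (2 * Real.pi)) *
      ∫ θ in (0 : ℝ)..(2 * Real.pi),
        f (!₂[r * Real.cos θ, r * Real.sin θ] : EuclideanSpace ℝ (Fin 2))) :
    ∫⁻ v : EuclideanSpace ℝ (Fin 2), ENNReal.ofReal (R ‖v‖ * loss ‖v‖) ∂volume
      = ∫⁻ v : EuclideanSpace ℝ (Fin 2), ENNReal.ofReal (f v * loss ‖v‖) ∂volume := by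
  obtain rfl : R = circularization f := funext hR
  have hcircle := (ae_lintegral_polarPoint_ne_top hf_meas.ennreal_ofReal
    (hf_density ▸ ENNReal.one_ne_top)).mono fun _ =>
      ofReal_two_pi_mul_circularization hf_meas hf_nonneg
  calc ∫⁻ v : EuclideanSpace ℝ (Fin 2), ENNReal.ofReal (circularization f ‖v‖ * loss ‖v‖)
      = ∫⁻ v : EuclideanSpace ℝ (Fin 2), 1 * ENNReal.ofReal (circularization f ‖v‖ * loss ‖v‖) := by
        simp only [one_mul]
    _ = ∫⁻ r in Ioi 0, ENNReal.ofReal r * ENNReal.ofReal (circularization f r * loss r) *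
          ∫⁻ θ in Ioo (-π) π, 1 :=
        lintegral_mul_comp_norm_eq_lintegral_polarPoint measurable_const
          ((measurable_circularization hf_meas).mul hloss_meas).ennreal_ofReal
    _ = ∫⁻ r in Ioi 0, ENNReal.ofReal r * ENNReal.ofReal (loss r) *
          ∫⁻ θ in Ioo (-π) π, ENNReal.ofReal (f (polarPoint r θ)) := by
        refine lintegral_congr_ae (hcircle.mono fun r hr => ?_)
        dsimp only
        rw [setLIntegral_one, volume_Ioo, sub_neg_eq_add, ← two_mul, ← hr,
          ENNReal.ofReal_mul (circularization_nonneg hf_nonneg r)]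
        ring
    _ = ∫⁻ v, ENNReal.ofReal (f v) * ENNReal.ofReal (loss ‖v‖) :=
        (lintegral_mul_comp_norm_eq_lintegral_polarPoint hf_meas.ennreal_ofReal
          hloss_meas.ennreal_ofReal).symm
    _ = ∫⁻ v, ENNReal.ofReal (f v * loss ‖v‖) :=
        lintegral_congr fun v => (ENNReal.ofReal_mul (hf_nonneg v)).symm

/-- The circularized density has the same expected loss as the original
density: with `R r = (1/(2π)) ∫₀^{2π} f (r cos θ, r sin θ) dθ`,
`∫_{ℝ²} R ‖v‖ * loss ‖v‖ dλ = ∫_{ℝ²} f v * loss ‖v‖ dλ`. -/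
theorem circularized_density_same_expected_loss
    (f : EuclideanSpace ℝ (Fin 2) → ℝ) (hf_meas : Measurable f)
    (hf_nonneg : ∀ v, 0 ≤ f v)
    (hf_density : ∫⁻ v : EuclideanSpace ℝ (Fin 2), ENNReal.ofReal (f v) ∂volume = 1)
    (loss : ℝ → ℝ) (hloss_meas : Measurable loss)
    (hloss_nonneg : ∀ r, 0 ≤ r → 0 ≤ loss r)
    (R : ℝ → ℝ)
    (hR : ∀ r : ℝ, R r = (1 / (2 * Real.pi)) *
      ∫ θ in (0 : ℝ)..(2 * Real.pi),
        f (!₂[r * Real.cos θ, r * Real.sin θ] : EuclideanSpace ℝ (Fin 2))) :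
    ∫⁻ v : EuclideanSpace ℝ (Fin 2), ENNReal.ofReal (R ‖v‖ * loss ‖v‖) ∂volume
      = ∫⁻ v : EuclideanSpace ℝ (Fin 2), ENNReal.ofReal (f v * loss ‖v‖) ∂volume :=
  circularized_density_same_expected_loss_general f hf_meas hf_nonneg hf_density loss hloss_meas R
    hR
end
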